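/- arXiv:2601.01995 — 7 statements merged into one kernel-verified Lean document; each statement's English description precedes it below -/
import Mathlib

section
/- Let X and Y be real normed vector spaces, F : X → Y a map, C ⊆ X a nonempty set, and ξ† ∈ X with F(ξ†) = y. Let δ ≥ 0 and y^δ ∈ Y satisfy ‖y − y^δ‖ ≤ δ. Let κ ≥ 0 satisfy the stability bound ‖a − b‖ ≤ κ·‖F(a) − F(b)‖ for all a, b ∈ C. If ξ* ∈ C satisfies ‖F(ξ*) − y^δ‖ ≤ ‖F(ξ) − y^δ‖ for all ξ ∈ C (i.e., ξ* is a least-squares minimizer over C), then for every ξ_h ∈ C one has ‖ξ* − ξ†‖ ≤ ‖ξ_h − ξ†‖ + 2κ·(‖F(ξ_h) − F(ξ†)‖ + δ). -/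
theorem norm_sub_le_two_mul_of_norm_sub_le {E : Type*} [SeminormedAddCommGroup E] {a b c : E}
    (h : ‖a - c‖ ≤ ‖b - c‖) : ‖a - b‖ ≤ 2 * ‖b - c‖ :=
  calc ‖a - b‖ ≤ ‖a - c‖ + ‖c - b‖ := norm_sub_le_norm_sub_add_norm_sub a c b
    _ ≤ ‖b - c‖ + ‖b - c‖ := by rw [norm_sub_rev c b]; gcongr
    _ = 2 * ‖b - c‖ := by ring

theorem stmt_0_general {X Y : Type*} [NormedAddCommGroup X]
    [NormedAddCommGroup Y]
    (F : X → Y) (C : Set X) (ξdag : X) (y : Y)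
    (hF : F ξdag = y)
    (δ : ℝ) (yδ : Y) (hnoise : ‖y - yδ‖ ≤ δ)
    (κ : ℝ) (hκ : 0 ≤ κ)
    (hstab : ∀ a ∈ C, ∀ b ∈ C, ‖a - b‖ ≤ κ * ‖F a - F b‖)
    (ξstar : X) (hξstar : ξstar ∈ C)
    (hmin : ∀ ξ ∈ C, ‖F ξstar - yδ‖ ≤ ‖F ξ - yδ‖) :
    ∀ ξh ∈ C, ‖ξstar - ξdag‖ ≤ ‖ξh - ξdag‖ + 2 * κ * (‖F ξh - F ξdag‖ + δ) := by
  intro ξh hξh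
  have hresidual : ‖F ξh - yδ‖ ≤ ‖F ξh - F ξdag‖ + δ :=
    calc ‖F ξh - yδ‖ ≤ ‖F ξh - F ξdag‖ + ‖F ξdag - yδ‖ := norm_sub_le_norm_sub_add_norm_sub _ _ _
      _ ≤ ‖F ξh - F ξdag‖ + δ := by rw [hF]; gcongr
  calc ‖ξstar - ξdag‖ ≤ ‖ξstar - ξh‖ + ‖ξh - ξdag‖ := norm_sub_le_norm_sub_add_norm_sub _ _ _
    _ ≤ κ * ‖F ξstar - F ξh‖ + ‖ξh - ξdag‖ := by gcongr; exact hstab _ hξstar _ hξh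
    _ ≤ κ * (2 * ‖F ξh - yδ‖) + ‖ξh - ξdag‖ := by
      gcongr; exact norm_sub_le_two_mul_of_norm_sub_le (hmin ξh hξh)
    _ ≤ κ * (2 * (‖F ξh - F ξdag‖ + δ)) + ‖ξh - ξdag‖ := by gcongr
    _ = ‖ξh - ξdag‖ + 2 * κ * (‖F ξh - F ξdag‖ + δ) := by ring

/-- Error estimate of Proposition A.1 (regularization by discretization,
least squares version). -/
theorem stmt_0 {X Y : Type*} [NormedAddCommGroup X] [NormedSpace ℝ X]
    [NormedAddCommGroup Y] [NormedSpace ℝ Y]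
    (F : X → Y) (C : Set X) (hC : C.Nonempty) (ξdag : X) (y : Y)
    (hF : F ξdag = y)
    (δ : ℝ) (hδ : 0 ≤ δ) (yδ : Y) (hnoise : ‖y - yδ‖ ≤ δ)
    (κ : ℝ) (hκ : 0 ≤ κ)
    (hstab : ∀ a ∈ C, ∀ b ∈ C, ‖a - b‖ ≤ κ * ‖F a - F b‖)
    (ξstar : X) (hξstar : ξstar ∈ C)
    (hmin : ∀ ξ ∈ C, ‖F ξstar - yδ‖ ≤ ‖F ξ - yδ‖) :
    ∀ ξh ∈ C, ‖ξstar - ξdag‖ ≤ ‖ξh - ξdag‖ + 2 * κ * (‖F ξh - F ξdag‖ + δ) :=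
  stmt_0_general F C ξdag y hF δ yδ hnoise κ hκ hstab ξstar hξstar hmin
end

section
/- Let X and Y be real normed vector spaces, F : X → Y a map, and ξ† ∈ X with F(ξ†) = y. For each n ∈ ℕ let C_n ⊆ X be a nonempty set, p_n ∈ C_n, κ_n ≥ 0 with ‖a − b‖ ≤ κ_n·‖F(a) − F(b)‖ for all a, b ∈ C_n, δ_n ≥ 0, y_n ∈ Y with ‖y − y_n‖ ≤ δ_n, and ξ_n ∈ C_n a minimizer of ξ ↦ ‖F(ξ) − y_n‖ over C_n. If ‖p_n − ξ†‖ → 0, κ_n·‖F(p_n) − F(ξ†)‖ → 0, and κ_n·δ_n → 0 as n → ∞, then ‖ξ_n − ξ†‖ → 0 as n → ∞. -/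
/-!
Compare the minimizer `ξ n` with the feasible point `p n`. Stability bounds `‖ξ n - p n‖` by
`κ n * ‖F (ξ n) - F (p n)‖`, and since `ξ n` has a smaller residual than `p n`, that image distance
is at most `2 * ‖F (p n) - yn n‖ ≤ 2 * (‖F (p n) - F ξdag‖ + δ n)`. Hence
`‖ξ n - ξdag‖ ≤ 2 κ n ‖F (p n) - F ξdag‖ + 2 κ n δ n + ‖p n - ξdag‖`, and all three terms vanish.
-/

open Filter

section

variable {X Y : Type*} [PseudoMetricSpace X] [PseudoMetricSpace Y]

theorem dist_le_of_stable_of_residual_le {F : X → Y} {C : Set X} {κ δ : ℝ} {p ξ ξdag : X}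
    {yδ : Y} (hκ : 0 ≤ κ) (hstab : ∀ a ∈ C, ∀ b ∈ C, dist a b ≤ κ * dist (F a) (F b))
    (hp : p ∈ C) (hξ : ξ ∈ C) (hmin : dist (F ξ) yδ ≤ dist (F p) yδ)
    (hnoise : dist (F ξdag) yδ ≤ δ) :
    dist ξ ξdag ≤ 2 * (κ * dist (F p) (F ξdag)) + 2 * (κ * δ) + dist p ξdag := by
  have hres : dist (F p) yδ ≤ dist (F p) (F ξdag) + δ :=
    (dist_triangle _ _ _).trans (by gcongr)
  have himage : dist (F ξ) (F p) ≤ 2 * (dist (F p) (F ξdag) + δ) :=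
    calc dist (F ξ) (F p) ≤ dist (F ξ) yδ + dist (F p) yδ := dist_triangle_right _ _ _
      _ ≤ 2 * (dist (F p) (F ξdag) + δ) := by linarith
  calc dist ξ ξdag ≤ dist ξ p + dist p ξdag := dist_triangle _ _ _
    _ ≤ κ * dist (F ξ) (F p) + dist p ξdag := by gcongr; exact hstab ξ hξ p hp
    _ ≤ κ * (2 * (dist (F p) (F ξdag) + δ)) + dist p ξdag := by gcongr
    _ = 2 * (κ * dist (F p) (F ξdag)) + 2 * (κ * δ) + dist p ξdag := by ring

end

theorem stmt_1_general {X Y : Type*} [NormedAddCommGroup X]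
    [NormedAddCommGroup Y]
    (F : X → Y) (ξdag : X) (y : Y) (hF : F ξdag = y)
    (C : ℕ → Set X)
    (p : ℕ → X) (hp : ∀ n, p n ∈ C n)
    (κ : ℕ → ℝ) (hκ : ∀ n, 0 ≤ κ n)
    (hstab : ∀ n, ∀ a ∈ C n, ∀ b ∈ C n, ‖a - b‖ ≤ κ n * ‖F a - F b‖)
    (δ : ℕ → ℝ)
    (yn : ℕ → Y) (hnoise : ∀ n, ‖y - yn n‖ ≤ δ n)
    (ξ : ℕ → X) (hξ : ∀ n, ξ n ∈ C n)
    (hmin : ∀ n, ∀ ζ ∈ C n, ‖F (ξ n) - yn n‖ ≤ ‖F ζ - yn n‖)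
    (happrox : Tendsto (fun n => ‖p n - ξdag‖) atTop (nhds 0))
    (hFapprox : Tendsto (fun n => κ n * ‖F (p n) - F ξdag‖) atTop (nhds 0))
    (hκδ : Tendsto (fun n => κ n * δ n) atTop (nhds 0)) :
    Tendsto (fun n => ‖ξ n - ξdag‖) atTop (nhds 0) := by
  have hbound : ∀ n, ‖ξ n - ξdag‖ ≤
      2 * (κ n * ‖F (p n) - F ξdag‖) + 2 * (κ n * δ n) + ‖p n - ξdag‖ := fun n => by
    simpa only [dist_eq_norm] using dist_le_of_stable_of_residual_le (F := F) (hκ n)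
      (by simpa only [dist_eq_norm] using hstab n) (hp n) (hξ n)
      (by simpa only [dist_eq_norm] using hmin n _ (hp n))
      (by rw [dist_eq_norm, hF]; exact hnoise n)
  refine squeeze_zero (fun n => norm_nonneg _) hbound ?_
  simpa using ((hFapprox.const_mul 2).add (hκδ.const_mul 2)).add happrox

/-- Convergence statement of Proposition A.1, along a sequence of
discretization levels and noise levels. -/
theorem stmt_1 {X Y : Type*} [NormedAddCommGroup X] [NormedSpace ℝ X]
    [NormedAddCommGroup Y] [NormedSpace ℝ Y]
    (F : X → Y) (ξdag : X) (y : Y) (hF : F ξdag = y)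
    (C : ℕ → Set X) (hC : ∀ n, (C n).Nonempty)
    (p : ℕ → X) (hp : ∀ n, p n ∈ C n)
    (κ : ℕ → ℝ) (hκ : ∀ n, 0 ≤ κ n)
    (hstab : ∀ n, ∀ a ∈ C n, ∀ b ∈ C n, ‖a - b‖ ≤ κ n * ‖F a - F b‖)
    (δ : ℕ → ℝ) (hδ : ∀ n, 0 ≤ δ n)
    (yn : ℕ → Y) (hnoise : ∀ n, ‖y - yn n‖ ≤ δ n)
    (ξ : ℕ → X) (hξ : ∀ n, ξ n ∈ C n)
    (hmin : ∀ n, ∀ ζ ∈ C n, ‖F (ξ n) - yn n‖ ≤ ‖F ζ - yn n‖)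
    (happrox : Tendsto (fun n => ‖p n - ξdag‖) atTop (nhds 0))
    (hFapprox : Tendsto (fun n => κ n * ‖F (p n) - F ξdag‖) atTop (nhds 0))
    (hκδ : Tendsto (fun n => κ n * δ n) atTop (nhds 0)) :
    Tendsto (fun n => ‖ξ n - ξdag‖) atTop (nhds 0) :=
  stmt_1_general F ξdag y hF C p hp κ hκ hstab δ yn hnoise ξ hξ hmin happrox hFapprox hκδ
end

section
/- Let X and Y be real normed vector spaces, F : X → Y and F_τ : X → Y maps, C ⊆ X a nonempty set, and ξ† ∈ X with F(ξ†) = y. Let δ ≥ 0 and y^δ ∈ Y satisfy ‖y − y^δ‖ ≤ δ. Let κ ≥ 0 satisfy ‖a − b‖ ≤ κ·‖F(a) − F(b)‖ for all a, b ∈ C, and let η ≥ 0 satisfy ‖F_τ(ξ) − F(ξ)‖ ≤ η for all ξ ∈ C. Let ε ≥ 0 and let ξ̂ ∈ C be an ε-minimizer of the perturbed least-squares problem, i.e., ‖F_τ(ξ̂) − y^δ‖ ≤ ‖F_τ(ξ) − y^δ‖ + ε for all ξ ∈ C. Then for every ξ_h ∈ C one has ‖ξ̂ − ξ†‖ ≤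 ‖ξ_h − ξ†‖ + κ·(2‖F(ξ_h) − F(ξ†)‖ + 2δ + 2η + ε). -/
/-!
Compare `ξ̂` with an arbitrary `ξ_h ∈ C` through the stability estimate on `C`. The residual
`‖F ξ̂ - F ξ_h‖` is bounded by passing to the perturbed operator at `ξ̂` (cost `η`), using the
`ε`-minimality of `ξ̂` against `ξ_h`, and returning to `F` at `ξ_h` (cost `η`); this leaves twice
the data misfit of `ξ_h`, which is at most `‖F ξ_h - F ξ†‖ + δ`.
-/

section ApproxMinimizer

variable {α Y : Type*} [PseudoMetricSpace Y] {F Fτ : α → Y} {yδ : Y} {η ε : ℝ} {a b : α}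

theorem dist_apply_le_of_perturbed_approx_min
    (ha : dist (Fτ a) (F a) ≤ η) (hb : dist (Fτ b) (F b) ≤ η)
    (hmin : dist (Fτ a) yδ ≤ dist (Fτ b) yδ + ε) :
    dist (F a) (F b) ≤ 2 * dist (F b) yδ + 2 * η + ε := by
  have hpert_b : dist (Fτ b) yδ ≤ η + dist (F b) yδ := dist_triangle _ _ _ |>.trans (by gcongr)
  calc dist (F a) (F b) ≤ dist (F a) (Fτ a) + dist (Fτ a) yδ + dist yδ (F b) :=
        dist_triangle4 _ _ _ _
    _ ≤ η + (η + dist (F b) yδ + ε) + dist (F b) yδ := by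
        rw [dist_comm (F a), dist_comm yδ]; gcongr; linarith
    _ = 2 * dist (F b) yδ + 2 * η + ε := by ring

end ApproxMinimizer

theorem stmt_2_general {X Y : Type*} [NormedAddCommGroup X]
    [NormedAddCommGroup Y]
    (F Fτ : X → Y) (C : Set X) (ξdag : X) (y : Y)
    (hF : F ξdag = y)
    (δ : ℝ) (yδ : Y) (hnoise : ‖y - yδ‖ ≤ δ)
    (κ : ℝ) (hκ : 0 ≤ κ)
    (hstab : ∀ a ∈ C, ∀ b ∈ C, ‖a - b‖ ≤ κ * ‖F a - F b‖)
    (η : ℝ) (hpert : ∀ ξ ∈ C, ‖Fτ ξ - F ξ‖ ≤ η)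
    (ε : ℝ)
    (ξhat : X) (hξhat : ξhat ∈ C)
    (hmin : ∀ ξ ∈ C, ‖Fτ ξhat - yδ‖ ≤ ‖Fτ ξ - yδ‖ + ε) :
    ∀ ξh ∈ C, ‖ξhat - ξdag‖ ≤
      ‖ξh - ξdag‖ + κ * (2 * ‖F ξh - F ξdag‖ + 2 * δ + 2 * η + ε) := by
  intro ξh hξh
  subst hF
  simp only [← dist_eq_norm] at *
  have hres : dist (F ξhat) (F ξh) ≤ 2 * dist (F ξh) yδ + 2 * η + ε :=
    dist_apply_le_of_perturbed_approx_min (hpert ξhat hξhat) (hpert ξh hξh) (hmin ξh hξh)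
  have hdata : dist (F ξh) yδ ≤ dist (F ξh) (F ξdag) + δ :=
    dist_triangle _ _ _ |>.trans (by gcongr)
  calc dist ξhat ξdag ≤ dist ξh ξdag + dist ξhat ξh := by
        rw [add_comm]; exact dist_triangle _ _ _
    _ ≤ dist ξh ξdag + κ * (2 * dist (F ξh) (F ξdag) + 2 * δ + 2 * η + ε) := by
        gcongr
        calc dist ξhat ξh ≤ κ * dist (F ξhat) (F ξh) := hstab ξhat hξhat ξh hξh
          _ ≤ _ := by gcongr; linarith

/-- Error estimate of Proposition A.2 (regularization by discretization with
perturbed forward operator and approximate optimization). -/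
theorem stmt_2 {X Y : Type*} [NormedAddCommGroup X] [NormedSpace ℝ X]
    [NormedAddCommGroup Y] [NormedSpace ℝ Y]
    (F Fτ : X → Y) (C : Set X) (hC : C.Nonempty) (ξdag : X) (y : Y)
    (hF : F ξdag = y)
    (δ : ℝ) (hδ : 0 ≤ δ) (yδ : Y) (hnoise : ‖y - yδ‖ ≤ δ)
    (κ : ℝ) (hκ : 0 ≤ κ)
    (hstab : ∀ a ∈ C, ∀ b ∈ C, ‖a - b‖ ≤ κ * ‖F a - F b‖)
    (η : ℝ) (hη : 0 ≤ η) (hpert : ∀ ξ ∈ C, ‖Fτ ξ - F ξ‖ ≤ η)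
    (ε : ℝ) (hε : 0 ≤ ε)
    (ξhat : X) (hξhat : ξhat ∈ C)
    (hmin : ∀ ξ ∈ C, ‖Fτ ξhat - yδ‖ ≤ ‖Fτ ξ - yδ‖ + ε) :
    ∀ ξh ∈ C, ‖ξhat - ξdag‖ ≤
      ‖ξh - ξdag‖ + κ * (2 * ‖F ξh - F ξdag‖ + 2 * δ + 2 * η + ε) :=
  stmt_2_general F Fτ C ξdag y hF δ yδ hnoise κ hκ hstab η hpert ε ξhat hξhat hmin
end

section
/- Let X and Y be real normed vector spaces, F : X → Y a map, and ξ† ∈ X with F(ξ†) = y. For each n ∈ ℕ let C_n ⊆ X be a nonempty set, p_n ∈ C_n, F_n : X → Y a map, κ_n ≥ 0 with ‖a − b‖ ≤ κ_n·‖F(a) − F(b)‖ for all a, b ∈ C_n, η_n ≥ 0 with ‖F_n(ξ) − F(ξ)‖ ≤ η_n for all ξ ∈ C_n, δ_n ≥ 0, y_n ∈ Y with ‖y − y_n‖ ≤ δ_n, ε_n ≥ 0, and ξ̂_n ∈ C_n with ‖F_n(ξ̂_n) − y_n‖ ≤ ‖F_n(ξ) − y_n‖ + ε_n for all ξ ∈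 C_n. If there is M ≥ 0 with ε_n ≤ M·δ_n for all n, and ‖p_n − ξ†‖ → 0, κ_n·‖F(p_n) − F(ξ†)‖ → 0, κ_n·η_n → 0, and κ_n·δ_n → 0 as n → ∞, then ‖ξ̂_n − ξ†‖ → 0 as n → ∞. -/
/-!
Testing the quasi-minimality of `ξ̂ₙ` against the comparison point `pₙ` bounds
`‖F ξ̂ₙ - F pₙ‖` by `2ηₙ + 2δₙ + εₙ + 2‖F pₙ - F ξ†‖`. Stability on `Cₙ` multiplies this by `κₙ`,
and with `εₙ ≤ M δₙ` the bound on `‖ξ̂ₙ - ξ†‖ ≤ ‖ξ̂ₙ - pₙ‖ + ‖pₙ - ξ†‖` becomes a combination of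
the four sequences assumed to tend to zero.
-/

open Filter

/-- Here `u' = G ξ̂` and `v' = G p` are perturbed values of `u = F ξ̂` and `v = F p`, and `z'` is
noisy data for `z`. -/
theorem norm_sub_le_of_quasi_min {Y : Type*} [SeminormedAddCommGroup Y] {u u' v v' z z' : Y}
    {η δ ε : ℝ} (hu : ‖u' - u‖ ≤ η) (hv : ‖v' - v‖ ≤ η) (hz : ‖z - z'‖ ≤ δ)
    (hmin : ‖u' - z'‖ ≤ ‖v' - z'‖ + ε) :
    ‖u - v‖ ≤ 2 * η + 2 * δ + ε + 2 * ‖v - z‖ := by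
  have hvz : ‖v - z'‖ ≤ ‖v - z‖ + δ :=
    (norm_sub_le_norm_sub_add_norm_sub v z z').trans (by linarith)
  have hv'z : ‖v' - z'‖ ≤ η + ‖v - z‖ + δ :=
    (norm_sub_le_norm_sub_add_norm_sub v' v z').trans (by linarith)
  calc ‖u - v‖ ≤ ‖u - u'‖ + ‖u' - v‖ := norm_sub_le_norm_sub_add_norm_sub ..
    _ ≤ ‖u - u'‖ + (‖u' - z'‖ + ‖z' - v‖) := by gcongr; exact norm_sub_le_norm_sub_add_norm_sub ..
    _ ≤ η + (η + ‖v - z‖ + δ + ε) + (‖v - z‖ + δ) := by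
        rw [norm_sub_rev u, norm_sub_rev z']
        linarith
    _ = 2 * η + 2 * δ + ε + 2 * ‖v - z‖ := by ring

theorem norm_sub_le_of_quasi_min_of_stable {X Y : Type*} [SeminormedAddCommGroup X]
    [SeminormedAddCommGroup Y] {F G : X → Y} {C : Set X} {ξdag p ξhat : X} {z : Y}
    {κ η δ ε : ℝ} (hκ : 0 ≤ κ) (hstab : ∀ a ∈ C, ∀ b ∈ C, ‖a - b‖ ≤ κ * ‖F a - F b‖)
    (hpert : ∀ ξ ∈ C, ‖G ξ - F ξ‖ ≤ η) (hz : ‖F ξdag - z‖ ≤ δ) (hp : p ∈ C) (hξhat : ξhat ∈ C)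
    (hmin : ‖G ξhat - z‖ ≤ ‖G p - z‖ + ε) :
    ‖ξhat - ξdag‖ ≤ κ * (2 * η + 2 * δ + ε + 2 * ‖F p - F ξdag‖) + ‖p - ξdag‖ := by
  have hres := norm_sub_le_of_quasi_min (hpert ξhat hξhat) (hpert p hp) hz hmin
  calc ‖ξhat - ξdag‖ ≤ ‖ξhat - p‖ + ‖p - ξdag‖ := norm_sub_le_norm_sub_add_norm_sub ..
    _ ≤ κ * ‖F ξhat - F p‖ + ‖p - ξdag‖ := by gcongr; exact hstab _ hξhat _ hp
    _ ≤ _ := by gcongr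

theorem stmt_3_general {X Y : Type*} [NormedAddCommGroup X] [NormedSpace ℝ X]
    [NormedAddCommGroup Y] [NormedSpace ℝ Y]
    (F : X → Y) (ξdag : X) (y : Y) (hF : F ξdag = y)
    (C : ℕ → Set X)
    (p : ℕ → X) (hp : ∀ n, p n ∈ C n)
    (Fn : ℕ → X → Y)
    (κ : ℕ → ℝ) (hκ : ∀ n, 0 ≤ κ n)
    (hstab : ∀ n, ∀ a ∈ C n, ∀ b ∈ C n, ‖a - b‖ ≤ κ n * ‖F a - F b‖)
    (η : ℕ → ℝ)
    (hpert : ∀ n, ∀ ξ ∈ C n, ‖Fn n ξ - F ξ‖ ≤ η n)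
    (δ : ℕ → ℝ)
    (yn : ℕ → Y) (hnoise : ∀ n, ‖y - yn n‖ ≤ δ n)
    (ε : ℕ → ℝ)
    (ξhat : ℕ → X) (hξhat : ∀ n, ξhat n ∈ C n)
    (hmin : ∀ n, ∀ ξ ∈ C n, ‖Fn n (ξhat n) - yn n‖ ≤ ‖Fn n ξ - yn n‖ + ε n)
    (M : ℝ) (hεδ : ∀ n, ε n ≤ M * δ n)
    (happrox : Tendsto (fun n => ‖p n - ξdag‖) atTop (nhds 0))
    (hFapprox : Tendsto (fun n => κ n * ‖F (p n) - F ξdag‖) atTop (nhds 0))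
    (hκη : Tendsto (fun n => κ n * η n) atTop (nhds 0))
    (hκδ : Tendsto (fun n => κ n * δ n) atTop (nhds 0)) :
    Tendsto (fun n => ‖ξhat n - ξdag‖) atTop (nhds 0) := by
  subst hF
  have hbound : ∀ n, ‖ξhat n - ξdag‖ ≤ 2 * (κ n * η n) + (2 + M) * (κ n * δ n)
      + 2 * (κ n * ‖F (p n) - F ξdag‖) + ‖p n - ξdag‖ := fun n => by
    have hκε := mul_le_mul_of_nonneg_left (hεδ n) (hκ n)
    have hestimate := norm_sub_le_of_quasi_min_of_stable (hκ n) (hstab n) (hpert n) (hnoise n)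
      (hp n) (hξhat n) (hmin n (p n) (hp n))
    linarith
  have hlim := (((hκη.const_mul 2).add (hκδ.const_mul (2 + M))).add (hFapprox.const_mul 2)).add
    happrox
  simp only [mul_zero, add_zero] at hlim
  exact squeeze_zero (fun n => norm_nonneg _) hbound hlim

/-- Convergence statement of Proposition A.2 under the precision choice
ε = O(δ). -/
theorem stmt_3 {X Y : Type*} [NormedAddCommGroup X] [NormedSpace ℝ X]
    [NormedAddCommGroup Y] [NormedSpace ℝ Y]
    (F : X → Y) (ξdag : X) (y : Y) (hF : F ξdag = y)
    (C : ℕ → Set X) (hC : ∀ n, (C n).Nonempty)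
    (p : ℕ → X) (hp : ∀ n, p n ∈ C n)
    (Fn : ℕ → X → Y)
    (κ : ℕ → ℝ) (hκ : ∀ n, 0 ≤ κ n)
    (hstab : ∀ n, ∀ a ∈ C n, ∀ b ∈ C n, ‖a - b‖ ≤ κ n * ‖F a - F b‖)
    (η : ℕ → ℝ) (hη : ∀ n, 0 ≤ η n)
    (hpert : ∀ n, ∀ ξ ∈ C n, ‖Fn n ξ - F ξ‖ ≤ η n)
    (δ : ℕ → ℝ) (hδ : ∀ n, 0 ≤ δ n)
    (yn : ℕ → Y) (hnoise : ∀ n, ‖y - yn n‖ ≤ δ n)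
    (ε : ℕ → ℝ) (hε : ∀ n, 0 ≤ ε n)
    (ξhat : ℕ → X) (hξhat : ∀ n, ξhat n ∈ C n)
    (hmin : ∀ n, ∀ ξ ∈ C n, ‖Fn n (ξhat n) - yn n‖ ≤ ‖Fn n ξ - yn n‖ + ε n)
    (M : ℝ) (hM : 0 ≤ M) (hεδ : ∀ n, ε n ≤ M * δ n)
    (happrox : Tendsto (fun n => ‖p n - ξdag‖) atTop (nhds 0))
    (hFapprox : Tendsto (fun n => κ n * ‖F (p n) - F ξdag‖) atTop (nhds 0))
    (hκη : Tendsto (fun n => κ n * η n) atTop (nhds 0))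
    (hκδ : Tendsto (fun n => κ n * δ n) atTop (nhds 0)) :
    Tendsto (fun n => ‖ξhat n - ξdag‖) atTop (nhds 0) :=
  stmt_3_general F ξdag y hF C p hp Fn κ hκ hstab η hpert δ yn hnoise ε ξhat hξhat hmin M hεδ
    happrox hFapprox hκη hκδ
end

section
/- Let X and Y be real normed vector spaces, F : X → Y a map, ξ† ∈ X with F(ξ†) = y. Let s ∈ (0,1], d ∈ ℕ with d ≥ 1, ℓ = 3/2 + 2s/d, k = 2s, and assume ℓ > k; set r = min{1/2, ℓ−k} and t = r/(r+k). Let C₁, C₂, C₃ ≥ 0, and for each h ∈ (0,1] let C_h ⊆ X be a nonempty set containing a point p_h with ‖p_h − ξ†‖ ≤ C₁·h^{1/2} and ‖F(p_h) − F(ξ†)‖ ≤ C₂·h^{ℓ}, and suppose ‖a − b‖ ≤ C₃·h^{−k}·‖F(a) − F(b)‖ for all a, b ∈ C_h. For δ ∈ (0,1], set h(δ) = δ^{1/(r+k)}, let y^δ ∈ Y with ‖y − y^δ‖ ≤ δ, and let ξ_δ ∈ C_{h(δ)} be a minimizer of ξ ↦ ‖F(ξ) − y^δ‖ over C_{h(δ)}.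 Then ‖ξ_δ − ξ†‖ ≤ (C₁ + 2·C₂·C₃ + 2·C₃)·δ^t for all δ ∈ (0,1]. -/
/-!
Compare the regularized solution `ξδ` with the discrete approximation `p h` of `ξ†` in the same
discrete set. Minimality of the residual and the noise bound give
`‖F ξδ - F (p h)‖ ≤ 2 (C₂ h^ℓ + δ)`, and the stability estimate on the discrete set turns this into
`‖ξδ - p h‖ ≤ 2 C₃ h^(-k) (C₂ h^ℓ + δ)`. With the a priori choice `h^(r+k) = δ` all three error
contributions `h^(1/2)`, `h^(ℓ-k)` and `δ h^(-k)` are bounded by `h^r = δ^t`.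
-/

open Real

theorem norm_sub_le_of_residual_le {X Y : Type*} [SeminormedAddCommGroup X]
    [SeminormedAddCommGroup Y] {F : X → Y} {ξdag p ξ : X} {yδ : Y} {δ κ : ℝ} (hκ : 0 ≤ κ)
    (hstab : ‖ξ - p‖ ≤ κ * ‖F ξ - F p‖) (hmin : ‖F ξ - yδ‖ ≤ ‖F p - yδ‖)
    (hnoise : ‖F ξdag - yδ‖ ≤ δ) :
    ‖ξ - ξdag‖ ≤ ‖p - ξdag‖ + 2 * κ * (‖F p - F ξdag‖ + δ) := by
  have hres : ‖F ξ - F p‖ ≤ 2 * (‖F p - F ξdag‖ + δ) :=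
    calc ‖F ξ - F p‖ ≤ ‖F ξ - yδ‖ + ‖F p - yδ‖ := by
          rw [← norm_sub_rev yδ (F p)]; exact norm_sub_le_norm_sub_add_norm_sub ..
      _ ≤ 2 * ‖F p - yδ‖ := by linarith
      _ ≤ 2 * (‖F p - F ξdag‖ + ‖F ξdag - yδ‖) := by
        gcongr; exact norm_sub_le_norm_sub_add_norm_sub ..
      _ ≤ 2 * (‖F p - F ξdag‖ + δ) := by gcongr
  calc ‖ξ - ξdag‖ ≤ ‖ξ - p‖ + ‖p - ξdag‖ := norm_sub_le_norm_sub_add_norm_sub ..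
    _ ≤ κ * (2 * (‖F p - F ξdag‖ + δ)) + ‖p - ξdag‖ := by
      gcongr; exact hstab.trans (by gcongr)
    _ = ‖p - ξdag‖ + 2 * κ * (‖F p - F ξdag‖ + δ) := by ring

theorem add_mul_rpow_add_le_mul_rpow {h r k ℓ C₁ C₂ C₃ : ℝ} (hh0 : 0 < h) (hh1 : h ≤ 1)
    (hr_half : r ≤ 1 / 2) (hr_ℓk : r ≤ ℓ - k) (hC₁ : 0 ≤ C₁) (hC₂ : 0 ≤ C₂) (hC₃ : 0 ≤ C₃) :
    C₁ * h ^ ((1 : ℝ) / 2) + 2 * (C₃ * h ^ (-k)) * (C₂ * h ^ ℓ + h ^ (r + k))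
      ≤ (C₁ + 2 * C₂ * C₃ + 2 * C₃) * h ^ r := by
  have h_half : h ^ ((1 : ℝ) / 2) ≤ h ^ r := rpow_le_rpow_of_exponent_ge hh0 hh1 hr_half
  have h_ℓk : h ^ (ℓ - k) ≤ h ^ r := rpow_le_rpow_of_exponent_ge hh0 hh1 hr_ℓk
  have h_mul_ℓ : h ^ (-k) * h ^ ℓ = h ^ (ℓ - k) := by rw [← rpow_add hh0]; ring_nf
  have h_mul_rk : h ^ (-k) * h ^ (r + k) = h ^ r := by rw [← rpow_add hh0]; ring_nf
  calc C₁ * h ^ ((1 : ℝ) / 2) + 2 * (C₃ * h ^ (-k)) * (C₂ * h ^ ℓ + h ^ (r + k))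
        = C₁ * h ^ ((1 : ℝ) / 2) + 2 * C₂ * C₃ * (h ^ (-k) * h ^ ℓ)
            + 2 * C₃ * (h ^ (-k) * h ^ (r + k)) := by ring
    _ = C₁ * h ^ ((1 : ℝ) / 2) + 2 * C₂ * C₃ * h ^ (ℓ - k) + 2 * C₃ * h ^ r := by
          rw [h_mul_ℓ, h_mul_rk]
    _ ≤ C₁ * h ^ r + 2 * C₂ * C₃ * h ^ r + 2 * C₃ * h ^ r := by gcongr
    _ = (C₁ + 2 * C₂ * C₃ + 2 * C₃) * h ^ r := by ring

theorem stmt_10_general {X Y : Type*} [NormedAddCommGroup X]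
    [NormedAddCommGroup Y]
    (F : X → Y) (ξdag : X) (y : Y) (hF : F ξdag = y)
    (s : ℝ) (hs0 : 0 < s)
    (ℓ k r t : ℝ)
    (hk : k = 2*s) (hℓk : ℓ > k)
    (hr : r = min (1/2) (ℓ - k)) (ht : t = r/(r+k))
    (C₁ C₂ C₃ : ℝ) (hC₁ : 0 ≤ C₁) (hC₂ : 0 ≤ C₂) (hC₃ : 0 ≤ C₃)
    (C : ℝ → Set X) (p : ℝ → X)
    (hpmem : ∀ h : ℝ, 0 < h → h ≤ 1 → p h ∈ C h)
    (hpapp : ∀ h : ℝ, 0 < h → h ≤ 1 → ‖p h - ξdag‖ ≤ C₁ * h ^ ((1:ℝ)/2))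
    (hFapp : ∀ h : ℝ, 0 < h → h ≤ 1 → ‖F (p h) - F ξdag‖ ≤ C₂ * h ^ ℓ)
    (hstab : ∀ h : ℝ, 0 < h → h ≤ 1 → ∀ a ∈ C h, ∀ b ∈ C h,
      ‖a - b‖ ≤ C₃ * h ^ (-k) * ‖F a - F b‖)
    (yδ : ℝ → Y) (hnoise : ∀ δ : ℝ, 0 < δ → δ ≤ 1 → ‖y - yδ δ‖ ≤ δ)
    (ξδ : ℝ → X)
    (hξmem : ∀ δ : ℝ, 0 < δ → δ ≤ 1 → ξδ δ ∈ C (δ ^ (1/(r+k))))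
    (hmin : ∀ δ : ℝ, 0 < δ → δ ≤ 1 → ∀ ξ ∈ C (δ ^ (1/(r+k))),
      ‖F (ξδ δ) - yδ δ‖ ≤ ‖F ξ - yδ δ‖) :
    ∀ δ : ℝ, 0 < δ → δ ≤ 1 →
      ‖ξδ δ - ξdag‖ ≤ (C₁ + 2*C₂*C₃ + 2*C₃) * δ ^ t := by
  intro δ hδ0 hδ1
  have hr0 : 0 < r := hr ▸ lt_min (by norm_num) (by linarith)
  have hrk : 0 < r + k := by linarith
  set h := δ ^ (1 / (r + k)) with hh
  have hh0 : 0 < h := rpow_pos_of_pos hδ0 _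
  have hh1 : h ≤ 1 := rpow_le_one hδ0.le hδ1 (by positivity)
  have hδ : h ^ (r + k) = δ := by rw [hh, one_div, rpow_inv_rpow hδ0.le hrk.ne']
  have hδt : δ ^ t = h ^ r := by rw [ht, hh, ← rpow_mul hδ0.le, one_div_mul_eq_div]
  have hp := hpmem h hh0 hh1
  calc ‖ξδ δ - ξdag‖
      ≤ ‖p h - ξdag‖ + 2 * (C₃ * h ^ (-k)) * (‖F (p h) - F ξdag‖ + δ) :=
        norm_sub_le_of_residual_le (by positivity)
          (hstab h hh0 hh1 _ (hξmem δ hδ0 hδ1) _ hp) (hmin δ hδ0 hδ1 _ hp)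
          (hF ▸ hnoise δ hδ0 hδ1)
    _ ≤ C₁ * h ^ ((1 : ℝ) / 2) + 2 * (C₃ * h ^ (-k)) * (C₂ * h ^ ℓ + h ^ (r + k)) := by
        rw [hδ]; gcongr
        exacts [hpapp h hh0 hh1, hFapp h hh0 hh1]
    _ ≤ (C₁ + 2 * C₂ * C₃ + 2 * C₃) * h ^ r :=
        add_mul_rpow_add_le_mul_rpow hh0 hh1 (hr ▸ min_le_left _ _) (hr ▸ min_le_right _ _)
          hC₁ hC₂ hC₃
    _ = (C₁ + 2*C₂*C₃ + 2*C₃) * δ ^ t := by rw [hδt]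

/-- Abstract quantitative form of Proposition 3.1: convergence rate for
regularization by discretization with the a priori mesh-size choice
h(δ) = δ^(1/(r+k)). -/
theorem stmt_10 {X Y : Type*} [NormedAddCommGroup X] [NormedSpace ℝ X]
    [NormedAddCommGroup Y] [NormedSpace ℝ Y]
    (F : X → Y) (ξdag : X) (y : Y) (hF : F ξdag = y)
    (s : ℝ) (hs0 : 0 < s) (hs1 : s ≤ 1) (d : ℕ) (hd : 1 ≤ d)
    (ℓ k r t : ℝ)
    (hℓ : ℓ = 3/2 + 2*s/(d : ℝ)) (hk : k = 2*s) (hℓk : ℓ > k)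
    (hr : r = min (1/2) (ℓ - k)) (ht : t = r/(r+k))
    (C₁ C₂ C₃ : ℝ) (hC₁ : 0 ≤ C₁) (hC₂ : 0 ≤ C₂) (hC₃ : 0 ≤ C₃)
    (C : ℝ → Set X) (p : ℝ → X)
    (hCne : ∀ h : ℝ, 0 < h → h ≤ 1 → (C h).Nonempty)
    (hpmem : ∀ h : ℝ, 0 < h → h ≤ 1 → p h ∈ C h)
    (hpapp : ∀ h : ℝ, 0 < h → h ≤ 1 → ‖p h - ξdag‖ ≤ C₁ * h ^ ((1:ℝ)/2))
    (hFapp : ∀ h : ℝ, 0 < h → h ≤ 1 → ‖F (p h) - F ξdag‖ ≤ C₂ * h ^ ℓ)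
    (hstab : ∀ h : ℝ, 0 < h → h ≤ 1 → ∀ a ∈ C h, ∀ b ∈ C h,
      ‖a - b‖ ≤ C₃ * h ^ (-k) * ‖F a - F b‖)
    (yδ : ℝ → Y) (hnoise : ∀ δ : ℝ, 0 < δ → δ ≤ 1 → ‖y - yδ δ‖ ≤ δ)
    (ξδ : ℝ → X)
    (hξmem : ∀ δ : ℝ, 0 < δ → δ ≤ 1 → ξδ δ ∈ C (δ ^ (1/(r+k))))
    (hmin : ∀ δ : ℝ, 0 < δ → δ ≤ 1 → ∀ ξ ∈ C (δ ^ (1/(r+k))),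
      ‖F (ξδ δ) - yδ δ‖ ≤ ‖F ξ - yδ δ‖) :
    ∀ δ : ℝ, 0 < δ → δ ≤ 1 →
      ‖ξδ δ - ξdag‖ ≤ (C₁ + 2*C₂*C₃ + 2*C₃) * δ ^ t :=
  stmt_10_general F ξdag y hF s hs0 ℓ k r t hk hℓk hr ht C₁ C₂ C₃ hC₁ hC₂ hC₃ C p hpmem hpapp hFapp
    hstab yδ hnoise ξδ hξmem hmin
end

section
/- Let X and Y be real normed vector spaces, F : X → Y a map, ξ† ∈ X with F(ξ†) = y. Let s ∈ (0,1], d ∈ ℕ with d ≥ 1, ℓ = 3/2 + 2s/d, k = 2s, and assume ℓ > k; set r = min{1/2, ℓ−k} and t = r/(r+k). Let C₁, …, C₅ ≥ 0, and for each h ∈ (0,1] let C_h ⊆ X be a nonempty set containing a point p_h with ‖p_h − ξ†‖ ≤ C₁·h^{1/2} and ‖F(p_h) − F(ξ†)‖ ≤ C₂·h^{ℓ}, and suppose ‖a − b‖ ≤ C₃·h^{−k}·‖F(a) − F(b)‖ for all a, b ∈ C_h. For δ ∈ (0,1], set h(δ) = δ^{1/(r+k)} and τ(δ) = min{δ^{1/k²},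 h(δ)}, let y^δ ∈ Y with ‖y − y^δ‖ ≤ δ, let F_{τ(δ)} : X → Y satisfy ‖F_{τ(δ)}(ξ) − F(ξ)‖ ≤ C₄·τ(δ)^{k²} for all ξ ∈ C_{h(δ)}, let ε ∈ [0, C₅·δ], and let ξ̂_δ ∈ C_{h(δ)} satisfy ‖F_{τ(δ)}(ξ̂_δ) − y^δ‖ ≤ ‖F_{τ(δ)}(ξ) − y^δ‖ + ε for all ξ ∈ C_{h(δ)}. Then ‖ξ̂_δ − ξ†‖ ≤ (C₁ + 2·C₂·C₃ + C₃·(2 + 2·C₄ + C₅))·δ^t for all δ ∈ (0,1]. -/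
/-!
Compare the computed solution `ξ̂` with the projection `p_h` of the exact solution in the same
discrete set `C_h`. By the triangle inequality and quasi-minimality, the residual
`‖F ξ̂ - F p_h‖` is bounded by twice the perturbation, approximation and noise levels plus the
suboptimality `ε`, i.e. by `O(τ^{k²} + h^ℓ + δ)`. Stability on `C_h` turns this into
`‖ξ̂ - p_h‖ = O(h^{-k} (h^ℓ + δ))`, and `‖p_h - ξ†‖ = O(h^{1/2})`. With `h = δ^{1/(r+k)}` and
`τ ≤ δ^{1/k²}` each of the three terms `h^{ℓ-k}`, `h^{-k} δ`, `h^{1/2}` is at most `δ^{r/(r+k)}`.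
-/

open Real

section QuasiMinimizer

variable {X Y : Type*} [PseudoMetricSpace X] [PseudoMetricSpace Y]

/-- Here `u, v` are the exact data `F ξ̂, F p`, `u', v'` their perturbations `F_τ ξ̂, F_τ p`,
and `yδ` the noisy observation of `y`. -/
theorem dist_le_of_perturbed_quasiMinimizer {u u' v v' y yδ : Y} {η B δ ε : ℝ}
    (hu : dist u' u ≤ η) (hv : dist v' v ≤ η) (hvy : dist v y ≤ B) (hy : dist y yδ ≤ δ)
    (hmin : dist u' yδ ≤ dist v' yδ + ε) :
    dist u v ≤ 2 * η + 2 * B + 2 * δ + ε := by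
  have hv' : dist v' yδ ≤ η + B + δ :=
    calc dist v' yδ ≤ dist v' v + dist v y + dist y yδ := dist_triangle4 _ _ _ _
      _ ≤ η + B + δ := by gcongr
  calc dist u v ≤ dist u u' + dist u' yδ + dist yδ v := dist_triangle4 _ _ _ _
    _ ≤ dist u' u + dist u' yδ + (dist y yδ + dist v y) := by
        rw [dist_comm u, dist_comm y, dist_comm v]
        gcongr
        exact dist_triangle _ _ _
    _ ≤ η + (η + B + δ + ε) + (δ + B) := by gcongr; linarith
    _ = 2 * η + 2 * B + 2 * δ + ε := by ring

theorem dist_le_of_stable_quasiMinimizer {F Fτ : X → Y} {ξ p ξ₀ : X} {y yδ : Y}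
    {L A η B δ ε : ℝ} (hL : 0 ≤ L) (hstab : dist ξ p ≤ L * dist (F ξ) (F p))
    (hp : dist p ξ₀ ≤ A) (hξτ : dist (Fτ ξ) (F ξ) ≤ η) (hpτ : dist (Fτ p) (F p) ≤ η)
    (hpy : dist (F p) y ≤ B) (hy : dist y yδ ≤ δ)
    (hmin : dist (Fτ ξ) yδ ≤ dist (Fτ p) yδ + ε) :
    dist ξ ξ₀ ≤ L * (2 * η + 2 * B + 2 * δ + ε) + A :=
  calc dist ξ ξ₀ ≤ dist ξ p + dist p ξ₀ := dist_triangle _ _ _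
    _ ≤ L * (2 * η + 2 * B + 2 * δ + ε) + A := by
        gcongr
        exact hstab.trans <| by
          gcongr; exact dist_le_of_perturbed_quasiMinimizer hξτ hpτ hpy hy hmin

end QuasiMinimizer

section Exponents

variable {δ r k : ℝ}

theorem rpow_one_div_rpow_le (hδ0 : 0 < δ) (hδ1 : δ ≤ 1) (hrk : 0 < r + k) {a : ℝ}
    (ha : r ≤ a) : (δ ^ (1 / (r + k))) ^ a ≤ δ ^ (r / (r + k)) := by
  rw [← rpow_mul hδ0.le, one_div_mul_eq_div]
  exact rpow_le_rpow_of_exponent_ge hδ0 hδ1 (by gcongr)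

theorem rpow_one_div_rpow_neg_mul_self (hδ : 0 < δ) (hrk : r + k ≠ 0) :
    (δ ^ (1 / (r + k))) ^ (-k) * δ = δ ^ (r / (r + k)) := by
  rw [← rpow_mul hδ.le, ← rpow_add_one hδ.ne']
  congr 1
  field_simp
  ring

theorem min_rpow_one_div_rpow_le {m x : ℝ} (hδ : 0 ≤ δ) (hx : 0 ≤ x) (hm : 0 < m) :
    (min (δ ^ (1 / m)) x) ^ m ≤ δ :=
  calc (min (δ ^ (1 / m)) x) ^ m ≤ (δ ^ (1 / m)) ^ m :=
        rpow_le_rpow (le_min (by positivity) hx) (min_le_left _ _) hm.le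
    _ = δ := by rw [one_div, rpow_inv_rpow hδ hm.ne']

end Exponents

theorem stmt_11_general {X Y : Type*} [NormedAddCommGroup X]
    [NormedAddCommGroup Y]
    (F : X → Y) (ξdag : X) (y : Y) (hF : F ξdag = y)
    (s : ℝ) (hs0 : 0 < s)
    (ℓ k r t : ℝ)
    (hk : k = 2*s) (hℓk : ℓ > k)
    (hr : r = min (1/2) (ℓ - k)) (ht : t = r/(r+k))
    (C₁ C₂ C₃ C₄ C₅ : ℝ)
    (hC₁ : 0 ≤ C₁) (hC₂ : 0 ≤ C₂) (hC₃ : 0 ≤ C₃) (hC₄ : 0 ≤ C₄)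
    (C : ℝ → Set X) (p : ℝ → X)
    (hpmem : ∀ h : ℝ, 0 < h → h ≤ 1 → p h ∈ C h)
    (hpapp : ∀ h : ℝ, 0 < h → h ≤ 1 → ‖p h - ξdag‖ ≤ C₁ * h ^ ((1:ℝ)/2))
    (hFapp : ∀ h : ℝ, 0 < h → h ≤ 1 → ‖F (p h) - F ξdag‖ ≤ C₂ * h ^ ℓ)
    (hstab : ∀ h : ℝ, 0 < h → h ≤ 1 → ∀ a ∈ C h, ∀ b ∈ C h,
      ‖a - b‖ ≤ C₃ * h ^ (-k) * ‖F a - F b‖)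
    (yδ : ℝ → Y) (hnoise : ∀ δ : ℝ, 0 < δ → δ ≤ 1 → ‖y - yδ δ‖ ≤ δ)
    (Fτ : ℝ → X → Y)
    (hpert : ∀ δ : ℝ, 0 < δ → δ ≤ 1 → ∀ ξ ∈ C (δ ^ (1/(r+k))),
      ‖Fτ δ ξ - F ξ‖ ≤ C₄ * (min (δ ^ (1/k^2)) (δ ^ (1/(r+k)))) ^ (k^2))
    (ε : ℝ → ℝ)
    (hεδ : ∀ δ : ℝ, 0 < δ → δ ≤ 1 → ε δ ≤ C₅ * δ)
    (ξhat : ℝ → X)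
    (hξmem : ∀ δ : ℝ, 0 < δ → δ ≤ 1 → ξhat δ ∈ C (δ ^ (1/(r+k))))
    (hmin : ∀ δ : ℝ, 0 < δ → δ ≤ 1 → ∀ ξ ∈ C (δ ^ (1/(r+k))),
      ‖Fτ δ (ξhat δ) - yδ δ‖ ≤ ‖Fτ δ ξ - yδ δ‖ + ε δ) :
    ∀ δ : ℝ, 0 < δ → δ ≤ 1 →
      ‖ξhat δ - ξdag‖ ≤ (C₁ + 2*C₂*C₃ + C₃*(2 + 2*C₄ + C₅)) * δ ^ t := by
  intro δ hδ0 hδ1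
  have hk0 : 0 < k := by linarith
  have hr0 : 0 < r := hr ▸ lt_min one_half_pos (sub_pos.2 hℓk)
  set h := δ ^ (1 / (r + k))
  have hh0 : 0 < h := rpow_pos_of_pos hδ0 _
  have hh1 : h ≤ 1 := rpow_le_one hδ0.le hδ1 (by positivity)
  have hτ : ∀ ξ ∈ C h, dist (Fτ δ ξ) (F ξ) ≤ C₄ * δ := fun ξ hξ =>
    (dist_eq_norm _ _).trans_le <| (hpert δ hδ0 hδ1 ξ hξ).trans <| by
      gcongr; exact min_rpow_one_div_rpow_le hδ0.le hh0.le (by positivity)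
  have hξ := hξmem δ hδ0 hδ1
  have hp := hpmem h hh0 hh1
  have herr := dist_le_of_stable_quasiMinimizer (L := C₃ * h ^ (-k)) (by positivity)
    (by simpa only [dist_eq_norm] using hstab h hh0 hh1 _ hξ _ hp)
    ((dist_eq_norm _ _).trans_le (hpapp h hh0 hh1)) (hτ _ hξ) (hτ _ hp)
    ((dist_eq_norm _ _).trans_le (hFapp h hh0 hh1))
    (hF ▸ (dist_eq_norm _ _).trans_le (hnoise δ hδ0 hδ1))
    (by simpa only [dist_eq_norm] using hmin δ hδ0 hδ1 _ hp)
  rw [dist_eq_norm] at herr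
  have hrk : 0 < r + k := by positivity
  have hℓk_rate : h ^ (ℓ - k) ≤ δ ^ t :=
    ht ▸ rpow_one_div_rpow_le hδ0 hδ1 hrk (hr ▸ min_le_right _ _)
  have hδ_rate : h ^ (-k) * δ = δ ^ t := ht ▸ rpow_one_div_rpow_neg_mul_self hδ0 hrk.ne'
  have hhalf_rate : h ^ ((1:ℝ)/2) ≤ δ ^ t :=
    ht ▸ rpow_one_div_rpow_le hδ0 hδ1 hrk (hr ▸ min_le_left _ _)
  calc ‖ξhat δ - ξdag‖
      ≤ C₃ * h ^ (-k) * (2 * (C₄ * δ) + 2 * (C₂ * h ^ ℓ) + 2 * δ + C₅ * δ) + C₁ * h ^ ((1:ℝ)/2) :=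
        herr.trans <| by gcongr; exact hεδ δ hδ0 hδ1
    _ = 2 * C₂ * C₃ * h ^ (ℓ - k) + C₃ * (2 + 2 * C₄ + C₅) * (h ^ (-k) * δ)
          + C₁ * h ^ ((1:ℝ)/2) := by
        rw [sub_eq_neg_add, rpow_add hh0]; ring
    _ ≤ 2 * C₂ * C₃ * δ ^ t + C₃ * (2 + 2 * C₄ + C₅) * δ ^ t + C₁ * δ ^ t := by
        rw [hδ_rate]; gcongr
    _ = (C₁ + 2*C₂*C₃ + C₃*(2 + 2*C₄ + C₅)) * δ ^ t := by ring

/-- Abstract quantitative form of Theorem 4.4: balanced convergence rate under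
the parameter choices ε = O(δ), τ(δ) = min{δ^(1/k²), h(δ)},
h(δ) = δ^(1/(r+k)). -/
theorem stmt_11 {X Y : Type*} [NormedAddCommGroup X] [NormedSpace ℝ X]
    [NormedAddCommGroup Y] [NormedSpace ℝ Y]
    (F : X → Y) (ξdag : X) (y : Y) (hF : F ξdag = y)
    (s : ℝ) (hs0 : 0 < s) (hs1 : s ≤ 1) (d : ℕ) (hd : 1 ≤ d)
    (ℓ k r t : ℝ)
    (hℓ : ℓ = 3/2 + 2*s/(d : ℝ)) (hk : k = 2*s) (hℓk : ℓ > k)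
    (hr : r = min (1/2) (ℓ - k)) (ht : t = r/(r+k))
    (C₁ C₂ C₃ C₄ C₅ : ℝ)
    (hC₁ : 0 ≤ C₁) (hC₂ : 0 ≤ C₂) (hC₃ : 0 ≤ C₃) (hC₄ : 0 ≤ C₄) (hC₅ : 0 ≤ C₅)
    (C : ℝ → Set X) (p : ℝ → X)
    (hCne : ∀ h : ℝ, 0 < h → h ≤ 1 → (C h).Nonempty)
    (hpmem : ∀ h : ℝ, 0 < h → h ≤ 1 → p h ∈ C h)
    (hpapp : ∀ h : ℝ, 0 < h → h ≤ 1 → ‖p h - ξdag‖ ≤ C₁ * h ^ ((1:ℝ)/2))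
    (hFapp : ∀ h : ℝ, 0 < h → h ≤ 1 → ‖F (p h) - F ξdag‖ ≤ C₂ * h ^ ℓ)
    (hstab : ∀ h : ℝ, 0 < h → h ≤ 1 → ∀ a ∈ C h, ∀ b ∈ C h,
      ‖a - b‖ ≤ C₃ * h ^ (-k) * ‖F a - F b‖)
    (yδ : ℝ → Y) (hnoise : ∀ δ : ℝ, 0 < δ → δ ≤ 1 → ‖y - yδ δ‖ ≤ δ)
    (Fτ : ℝ → X → Y)
    (hpert : ∀ δ : ℝ, 0 < δ → δ ≤ 1 → ∀ ξ ∈ C (δ ^ (1/(r+k))),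
      ‖Fτ δ ξ - F ξ‖ ≤ C₄ * (min (δ ^ (1/k^2)) (δ ^ (1/(r+k)))) ^ (k^2))
    (ε : ℝ → ℝ) (hε0 : ∀ δ : ℝ, 0 < δ → δ ≤ 1 → 0 ≤ ε δ)
    (hεδ : ∀ δ : ℝ, 0 < δ → δ ≤ 1 → ε δ ≤ C₅ * δ)
    (ξhat : ℝ → X)
    (hξmem : ∀ δ : ℝ, 0 < δ → δ ≤ 1 → ξhat δ ∈ C (δ ^ (1/(r+k))))
    (hmin : ∀ δ : ℝ, 0 < δ → δ ≤ 1 → ∀ ξ ∈ C (δ ^ (1/(r+k))),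
      ‖Fτ δ (ξhat δ) - yδ δ‖ ≤ ‖Fτ δ ξ - yδ δ‖ + ε δ) :
    ∀ δ : ℝ, 0 < δ → δ ≤ 1 →
      ‖ξhat δ - ξdag‖ ≤ (C₁ + 2*C₂*C₃ + C₃*(2 + 2*C₄ + C₅)) * δ ^ t :=
  stmt_11_general F ξdag y hF s hs0 ℓ k r t hk hℓk hr ht C₁ C₂ C₃ C₄ C₅ hC₁ hC₂ hC₃ hC₄ C p hpmem
    hpapp hFapp hstab yδ hnoise Fτ hpert ε hεδ ξhat hξmem hmin
end

section
/- Let X and Y be real normed vector spaces, F : X → Y a map, C ⊆ X a nonempty set, ξ† ∈ X with F(ξ†) = y, and y^δ ∈ Y with ‖y − y^δ‖ ≤ δ for some δ ≥ 0. Fix p ∈ C and let κ ≥ 0 satisfy the weaker, point-based stability bound ‖ξ − p‖ ≤ κ·‖F(ξ) − F(p)‖ for all ξ ∈ C. If ξ* ∈ C satisfies ‖F(ξ*) − y^δ‖ ≤ ‖F(ξ) − y^δ‖ for all ξ ∈ C, then ‖ξ* − ξ†‖ ≤ ‖p − ξ†‖ + 2κ·(‖F(p) − F(ξ†)‖ +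 δ). -/
theorem stmt_13_general {X Y : Type*} [NormedAddCommGroup X]
    [NormedAddCommGroup Y]
    (F : X → Y) (C : Set X) (ξdag : X) (y : Y)
    (hF : F ξdag = y)
    (δ : ℝ) (yδ : Y) (hnoise : ‖y - yδ‖ ≤ δ)
    (p : X) (hp : p ∈ C)
    (κ : ℝ) (hκ : 0 ≤ κ)
    (hstab : ∀ ξ ∈ C, ‖ξ - p‖ ≤ κ * ‖F ξ - F p‖)
    (ξstar : X) (hξstar : ξstar ∈ C)
    (hmin : ∀ ξ ∈ C, ‖F ξstar - yδ‖ ≤ ‖F ξ - yδ‖) :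
    ‖ξstar - ξdag‖ ≤ ‖p - ξdag‖ + 2 * κ * (‖F p - F ξdag‖ + δ) := by
  have hresidual : ‖F p - yδ‖ ≤ ‖F p - F ξdag‖ + δ :=
    calc ‖F p - yδ‖ ≤ ‖F p - F ξdag‖ + ‖F ξdag - yδ‖ := norm_sub_le_norm_sub_add_norm_sub _ _ _
      _ ≤ ‖F p - F ξdag‖ + δ := by rw [hF]; gcongr
  calc ‖ξstar - ξdag‖ ≤ ‖ξstar - p‖ + ‖p - ξdag‖ := norm_sub_le_norm_sub_add_norm_sub _ _ _
    _ ≤ κ * ‖F ξstar - F p‖ + ‖p - ξdag‖ := by gcongr; exact hstab ξstar hξstar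
    _ ≤ κ * (2 * ‖F p - yδ‖) + ‖p - ξdag‖ := by
      gcongr; exact norm_sub_le_two_mul_of_norm_sub_le (hmin p hp)
    _ = ‖p - ξdag‖ + 2 * κ * ‖F p - yδ‖ := by ring
    _ ≤ ‖p - ξdag‖ + 2 * κ * (‖F p - F ξdag‖ + δ) := by gcongr

/-- Variant of the error estimate of Proposition A.1 with a point-based
stability constant relative to a fixed comparison point p ∈ C. -/
theorem stmt_13 {X Y : Type*} [NormedAddCommGroup X] [NormedSpace ℝ X]
    [NormedAddCommGroup Y] [NormedSpace ℝ Y]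
    (F : X → Y) (C : Set X) (hC : C.Nonempty) (ξdag : X) (y : Y)
    (hF : F ξdag = y)
    (δ : ℝ) (hδ : 0 ≤ δ) (yδ : Y) (hnoise : ‖y - yδ‖ ≤ δ)
    (p : X) (hp : p ∈ C)
    (κ : ℝ) (hκ : 0 ≤ κ)
    (hstab : ∀ ξ ∈ C, ‖ξ - p‖ ≤ κ * ‖F ξ - F p‖)
    (ξstar : X) (hξstar : ξstar ∈ C)
    (hmin : ∀ ξ ∈ C, ‖F ξstar - yδ‖ ≤ ‖F ξ - yδ‖) :
    ‖ξstar - ξdag‖ ≤ ‖p - ξdag‖ + 2 * κ * (‖F p - F ξdag‖ + δ) :=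
  stmt_13_general F C ξdag y hF δ yδ hnoise p hp κ hκ hstab ξstar hξstar hmin
end
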